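/- If c is a positive definite real symmetric m×m matrix, then the Schrödinger representation 𝒲_c of the Heisenberg group H_ℝ^{(n,m)} on L²(ℝ^{m×n}) is irreducible: any closed subspace invariant under all operators 𝒲_c(h) is {0} or the whole space. -/

import Mathlib

open MeasureTheory
open Matrix

noncomputable section

/-- Triples `(λ, μ; κ)` underlying the Heisenberg group `H_ℝ^{(n,m)}`. -/
abbrev Htriple (n m : ℕ) :=
  Matrix (Fin m) (Fin n) ℝ × Matrix (Fin m) (Fin n) ℝ × Matrix (Fin m) (Fin m) ℝ

/-- The condition `κ + μ·ᵗλ` symmetric defining `H_ℝ^{(n,m)}`. -/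
def hCond {n m : ℕ} (a : Htriple n m) : Prop := (a.2.2 + a.2.1 * a.1ᵀ).IsSymm

/-- The Heisenberg multiplication
`(λ,μ;κ)∘(λ',μ';κ') = (λ+λ', μ+μ', κ+κ'+λᵗμ' − μᵗλ')`. -/
def hMul {n m : ℕ} (a b : Htriple n m) : Htriple n m :=
  (a.1 + b.1, a.2.1 + b.2.1, a.2.2 + b.2.2 + a.1 * b.2.1ᵀ - a.2.1 * b.1ᵀ)

/-- The inverse formula `(λ,μ;κ)⁻¹ = (−λ,−μ; −κ+λᵗμ−μᵗλ)`. -/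
def hInv {n m : ℕ} (a : Htriple n m) : Htriple n m :=
  (-a.1, -a.2.1, -a.2.2 + a.1 * a.2.1ᵀ - a.2.1 * a.1ᵀ)

/-- The Schrödinger representation operator
`(𝒲_c(λ₀,μ₀;κ₀)f)(λ) = exp(πi·tr(c(κ₀+μ₀ᵗλ₀+2λᵗμ₀)))·f(λ+λ₀)`. -/
def W {n m : ℕ} (c : Matrix (Fin m) (Fin m) ℝ) (h : Htriple n m)
    (f : (Fin m → Fin n → ℝ) → ℂ) : (Fin m → Fin n → ℝ) → ℂ :=
  fun x =>
    Complex.exp ((Real.pi : ℂ) * Complex.I *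
        (((c * (h.2.2 + h.2.1 * h.1ᵀ + (2 : ℝ) • (Matrix.of x * h.2.1ᵀ))).trace : ℝ))) *
      f (fun i j => x i j + h.1 i j)

/-! Let `f ∈ V` and `g ∈ Vᗮ`. Every time–frequency shift `x ↦ e^{2πi⟨x,ξ⟩} f(x + ℓ)` of `f` is
some `𝒲_c(h) f` (invertibility of `c` makes every frequency `ξ` reachable), so it lies in `V` and
is orthogonal to `g`. Hence, for each `ℓ`, the integrable function `conj f(· + ℓ) · g` has
vanishing Fourier transform and so vanishes a.e. By Tonelli,
`∫⁻ |f| · ∫⁻ |g| = ∫⁻ ℓ, ∫⁻ x, |f(x + ℓ)| |g(x)| = 0`, so `f = 0` or `g = 0`: if `V ≠ 0` then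
`Vᗮ = 0`. -/

open scoped FourierTransform SchwartzMap RealInnerProductSpace ComplexConjugate ENNReal

theorem MeasureTheory.Integrable.ae_eq_zero_of_fourier_eq_zero
    {V : Type*} [NormedAddCommGroup V] [InnerProductSpace ℝ V] [FiniteDimensional ℝ V]
    [MeasurableSpace V] [BorelSpace V] {F : V → ℂ} (hF : Integrable F) (h𝓕 : 𝓕 F = 0) :
    F =ᵐ[volume] 0 := by
  refine ae_eq_zero_of_integral_contDiff_smul_eq_zero hF.locallyIntegrable fun g hg hgc => ?_
  let ψ : 𝓢(V, ℂ) := 𝓕⁻ ((hgc.comp_left (g := Complex.ofRealCLM) rfl).toSchwartzMap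
    (by fun_prop))
  have hψ : 𝓕 ⇑ψ = fun x => (g x : ℂ) := by
    rw [← SchwartzMap.fourier_coe, FourierTransform.fourier_fourierInv_eq]; rfl
  calc ∫ x, g x • F x = ∫ x, F x • 𝓕 ⇑ψ x := by
        simp [hψ, Complex.real_smul, mul_comm]
    _ = ∫ ξ, 𝓕 F ξ • ψ ξ := by
        simpa using! (VectorFourier.integral_fourierIntegral_smul_eq_flip (ν := volume)
          (L := innerₗ V) Real.continuous_fourierChar continuous_inner hF ψ.integrable).symm
    _ = 0 := by simp [h𝓕]

theorem MeasureTheory.measurePreserving_uncurry {ι κ X : Type*} [Fintype ι] [Fintype κ]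
    [MeasurableSpace X] (μ : Measure X) [SigmaFinite μ] :
    MeasurePreserving (MeasurableEquiv.curry ι κ X).symm
      (Measure.pi fun _ => Measure.pi fun _ => μ) (Measure.pi fun _ => μ) := by
  refine ⟨(MeasurableEquiv.curry ι κ X).symm.measurable, (Measure.pi_eq fun s hs => ?_).symm⟩
  have hpre : (MeasurableEquiv.curry ι κ X).symm ⁻¹' Set.univ.pi s =
      Set.univ.pi fun i => Set.univ.pi fun j => s (i, j) := by
    ext x; simp [MeasurableEquiv.coe_curry_symm]
  rw [MeasurableEquiv.map_apply, hpre, Measure.pi_pi]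
  simp [Measure.pi_pi, Fintype.prod_prod_type]

theorem MeasureTheory.Integrable.ae_eq_zero_of_integral_exp_mul_eq_zero
    {ι κ : Type*} [Fintype ι] [Fintype κ] {F : (ι → κ → ℝ) → ℂ} (hF : Integrable F)
    (h : ∀ ξ : ι → κ → ℝ,
      ∫ x, Complex.exp (↑(-2 * Real.pi * ∑ i, ∑ j, x i j * ξ i j) * Complex.I) * F x = 0) :
    F =ᵐ[volume] 0 := by
  let Φ : EuclideanSpace ℝ (ι × κ) ≃ᵐ (ι → κ → ℝ) :=
    (MeasurableEquiv.toLp 2 _).symm.trans (MeasurableEquiv.curry ι κ ℝ)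
  have hΦ : MeasurePreserving Φ volume volume :=
    (EuclideanSpace.volume_preserving_symm_measurableEquiv_toLp _).trans
      (measurePreserving_uncurry (ι := ι) (κ := κ) (volume : Measure ℝ)).symm
  have hinner : ∀ v w, ⟪v, w⟫ = ∑ i, ∑ j, Φ v i j * Φ w i j := fun v w => by
    simp [Φ, PiLp.inner_apply, Fintype.sum_prod_type, mul_comm]
  have hFΦ : (F ∘ Φ) =ᵐ[volume] 0 := by
    refine ((hΦ.integrable_comp_emb Φ.measurableEmbedding).2 hF).ae_eq_zero_of_fourier_eq_zero ?_
    funext ξ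
    rw [Pi.zero_apply, Real.fourier_eq', ← h (Φ ξ), ← hΦ.integral_comp Φ.measurableEmbedding]
    simp [hinner]
  have := hFΦ.comp_tendsto (hΦ.symm Φ).quasiMeasurePreserving.tendsto_ae
  rwa [Function.comp_assoc, Φ.self_comp_symm, Function.comp_id] at this

section Translation

variable {G : Type*} [MeasurableSpace G] [AddCommGroup G] [MeasurableAdd₂ G]
  {μ : Measure G} [SFinite μ] [μ.IsAddRightInvariant] {f g : G → ℝ≥0∞}

theorem MeasureTheory.lintegral_lintegral_comp_add_mul (hf : Measurable f) (hg : Measurable g) :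
    ∫⁻ ℓ, ∫⁻ x, f (x + ℓ) * g x ∂μ ∂μ = (∫⁻ y, f y ∂μ) * ∫⁻ x, g x ∂μ := by
  have hmeas : Measurable (Function.uncurry fun ℓ x => f (x + ℓ) * g x) :=
    (hf.comp (measurable_snd.add measurable_fst)).mul (hg.comp measurable_snd)
  rw [lintegral_lintegral_swap hmeas.aemeasurable, ← lintegral_const_mul _ hg]
  refine lintegral_congr fun x => ?_
  simp_rw [add_comm x]
  rw [lintegral_mul_const (g x) (f := fun y => f (y + x)) (hf.comp (measurable_add_const x)),
    lintegral_add_right_eq_self f x]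

theorem MeasureTheory.ae_eq_zero_or_of_forall_ae_comp_add_mul_eq_zero
    (hf : Measurable f) (hg : Measurable g) (h : ∀ ℓ, ∀ᵐ x ∂μ, f (x + ℓ) * g x = 0) :
    f =ᵐ[μ] 0 ∨ g =ᵐ[μ] 0 := by
  have hzero : (∫⁻ y, f y ∂μ) * ∫⁻ x, g x ∂μ = 0 := by
    rw [← lintegral_lintegral_comp_add_mul hf hg]
    refine (lintegral_congr fun ℓ => ?_).trans lintegral_zero
    exact (lintegral_congr_ae (h ℓ)).trans lintegral_zero
  rcases mul_eq_zero.1 hzero with h0 | h0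
  · exact Or.inl ((lintegral_eq_zero_iff hf).1 h0)
  · exact Or.inr ((lintegral_eq_zero_iff hg).1 h0)

end Translation

theorem MeasureTheory.integral_conj_mul_eq_zero_of_mem_orthogonal {α : Type*}
    [MeasurableSpace α] {μ : Measure α} {V : Submodule ℂ (Lp ℂ 2 μ)} {u : α → ℂ}
    (hu : MemLp u 2 μ) (huV : hu.toLp u ∈ V) {g : Lp ℂ 2 μ} (hg : g ∈ Vᗮ) :
    ∫ x, conj (u x) * g x ∂μ = 0 := by
  rw [← Submodule.inner_right_of_mem_orthogonal huV hg, L2.inner_def]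
  refine integral_congr_ae ?_
  filter_upwards [hu.coeFn_toLp] with x hx
  rw [hx, RCLike.inner_apply']

section Schrodinger

variable {n m : ℕ} (c : Matrix (Fin m) (Fin m) ℝ)

theorem norm_W_apply (h : Htriple n m) (f : (Fin m → Fin n → ℝ) → ℂ) (x : Fin m → Fin n → ℝ) :
    ‖W c h f x‖ = ‖f (fun i j => x i j + h.1 i j)‖ := by
  rw [W, norm_mul, mul_comm (Real.pi : ℂ), mul_assoc, mul_comm Complex.I, ← Complex.ofReal_mul,
    Complex.norm_exp_ofReal_mul_I, one_mul]

theorem memLp_W (h : Htriple n m) {p : ℝ≥0∞} {f : (Fin m → Fin n → ℝ) → ℂ}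
    (hf : MemLp f p volume) : MemLp (W c h f) p volume := by
  have htrans : MemLp (fun x : Fin m → Fin n → ℝ => f (fun i j => x i j + h.1 i j)) p volume :=
    hf.comp_measurePreserving (measurePreserving_add_right volume (Matrix.of.symm h.1))
  refine htrans.of_le ?_ (.of_forall fun x => (norm_W_apply c h f x).le)
  exact (Continuous.aestronglyMeasurable (by fun_prop)).mul htrans.1

/-- `(ℓ, μ; -μ·ᵗℓ)` with `μ = (ᵗc)⁻¹ξ`: this `μ` turns the phase `tr(c·2x·ᵗμ)` into
`2⟨x, ξ⟩`, and this `κ` makes `κ + μ·ᵗλ = 0`. -/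
def timeFreqShift (ℓ ξ : Fin m → Fin n → ℝ) : Htriple n m :=
  (Matrix.of ℓ, (cᵀ)⁻¹ * Matrix.of ξ, -((cᵀ)⁻¹ * Matrix.of ξ * (Matrix.of ℓ)ᵀ))

theorem hCond_timeFreqShift (ℓ ξ : Fin m → Fin n → ℝ) : hCond (timeFreqShift c ℓ ξ) := by
  simp [hCond, timeFreqShift, Matrix.IsSymm]

theorem W_timeFreqShift_apply (hc : IsUnit c.det) (ℓ ξ : Fin m → Fin n → ℝ)
    (f : (Fin m → Fin n → ℝ) → ℂ) (x : Fin m → Fin n → ℝ) :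
    W c (timeFreqShift c ℓ ξ) f x =
      Complex.exp (↑(2 * Real.pi * ∑ i, ∑ j, x i j * ξ i j) * Complex.I) * f (x + ℓ) := by
  have hξ : cᵀ * ((cᵀ)⁻¹ * Matrix.of ξ) = Matrix.of ξ :=
    Matrix.mul_nonsing_inv_cancel_left _ _ (by rwa [Matrix.det_transpose])
  have htrace : (c * (Matrix.of x * ((cᵀ)⁻¹ * Matrix.of ξ)ᵀ)).trace = ∑ i, ∑ j, x i j * ξ i j := by
    rw [Matrix.trace_mul_comm, Matrix.mul_assoc, ← Matrix.transpose_transpose c,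
      ← Matrix.transpose_mul, Matrix.transpose_transpose, hξ]
    simp [Matrix.trace, Matrix.mul_apply]
  simp only [W, timeFreqShift, neg_add_cancel, zero_add, Matrix.mul_smul, Matrix.trace_smul,
    htrace, smul_eq_mul]
  congr 2
  push_cast
  ring

theorem conj_W_timeFreqShift_apply (hc : IsUnit c.det) (ℓ ξ : Fin m → Fin n → ℝ)
    (f : (Fin m → Fin n → ℝ) → ℂ) (x : Fin m → Fin n → ℝ) :
    conj (W c (timeFreqShift c ℓ ξ) f x) =
      Complex.exp (↑(-2 * Real.pi * ∑ i, ∑ j, x i j * ξ i j) * Complex.I) * conj (f (x + ℓ)) := by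
  rw [W_timeFreqShift_apply c hc, map_mul, ← Complex.exp_conj, map_mul, Complex.conj_ofReal,
    Complex.conj_I]
  push_cast
  ring_nf

end Schrodinger

theorem schrodinger_irreducible_general {n m : ℕ} (c : Matrix (Fin m) (Fin m) ℝ)
    (hcpos : c.PosDef)
    (V : Submodule ℂ (Lp ℂ 2 (volume : Measure (Fin m → Fin n → ℝ))))
    (hclosed : IsClosed (V : Set (Lp ℂ 2 (volume : Measure (Fin m → Fin n → ℝ)))))
    (hinv : ∀ h : Htriple n m, hCond h →
      ∀ f : Lp ℂ 2 (volume : Measure (Fin m → Fin n → ℝ)), f ∈ V →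
        ∀ g : Lp ℂ 2 (volume : Measure (Fin m → Fin n → ℝ)),
          (⇑g) =ᵐ[(volume : Measure (Fin m → Fin n → ℝ))] W c h (⇑f) → g ∈ V) :
    V = ⊥ ∨ V = ⊤ := by
  have hc : IsUnit c.det := (Matrix.isUnit_iff_isUnit_det c).1 hcpos.isUnit
  have : CompleteSpace V := hclosed.completeSpace_coe
  refine or_iff_not_imp_left.2 fun hV => Submodule.orthogonal_eq_bot_iff.1 <|
    (Submodule.eq_bot_iff _).2 fun g hg => ?_
  obtain ⟨f, hfV, hf⟩ := Submodule.exists_mem_ne_zero_of_ne_bot hV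
  have hperp (ℓ : Fin m → Fin n → ℝ) : ∀ᵐ x, conj (f (x + ℓ)) * g x = 0 := by
    refine Integrable.ae_eq_zero_of_integral_exp_mul_eq_zero
      (((Lp.memLp f).comp_measurePreserving (measurePreserving_add_right _ ℓ)).star.integrable_mul
        (Lp.memLp g)) fun ξ => ?_
    have hW := memLp_W c (timeFreqShift c ℓ ξ) (Lp.memLp f)
    rw [← integral_conj_mul_eq_zero_of_mem_orthogonal hW
      (hinv _ (hCond_timeFreqShift c ℓ ξ) f hfV _ hW.coeFn_toLp) hg]
    congr with x
    rw [conj_W_timeFreqShift_apply c hc, mul_assoc (Complex.exp _)]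
  have hprod (ℓ : Fin m → Fin n → ℝ) : ∀ᵐ x, ‖f (x + ℓ)‖ₑ * ‖g x‖ₑ = 0 :=
    (hperp ℓ).mono fun x hx => by simpa using congrArg (‖·‖ₑ) hx
  rcases ae_eq_zero_or_of_forall_ae_comp_add_mul_eq_zero (Lp.stronglyMeasurable f).measurable.enorm
    (Lp.stronglyMeasurable g).measurable.enorm hprod with h | h
  · exact absurd (Lp.eq_zero_iff_ae_eq_zero.2 (h.mono fun x hx => by simpa using hx)) hf
  · exact Lp.eq_zero_iff_ae_eq_zero.2 (h.mono fun x hx => by simpa using hx)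

/-- If `c` is positive definite symmetric then the Schrödinger representation `𝒲_c` of the
Heisenberg group on `L²(ℝ^{m×n})` is irreducible: every closed invariant subspace is
`{0}` or the whole space. -/
theorem schrodinger_irreducible {n m : ℕ} (c : Matrix (Fin m) (Fin m) ℝ)
    (hc : c.IsSymm) (hcpos : c.PosDef)
    (V : Submodule ℂ (Lp ℂ 2 (volume : Measure (Fin m → Fin n → ℝ))))
    (hclosed : IsClosed (V : Set (Lp ℂ 2 (volume : Measure (Fin m → Fin n → ℝ)))))
    (hinv : ∀ h : Htriple n m, hCond h →
      ∀ f : Lp ℂ 2 (volume : Measure (Fin m → Fin n → ℝ)), f ∈ V →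
        ∀ g : Lp ℂ 2 (volume : Measure (Fin m → Fin n → ℝ)),
          (⇑g) =ᵐ[(volume : Measure (Fin m → Fin n → ℝ))] W c h (⇑f) → g ∈ V) :
    V = ⊥ ∨ V = ⊤ :=
  schrodinger_irreducible_general c hcpos V hclosed hinv
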